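/- Let M ≥ 3 be an integer and p ∈ [0,1]. Let μ_{M,p} = (p/2)(δ_{e₃} + δ_{−e₃}) + ((1−p)/M)·Σ_{j=1}^M δ_{r_j}, where e₃ = (0,0,1) and r_j = (cos(2π(j−1)/M), sin(2π(j−1)/M), 0) are the vertices of a regular M-gon inscribed in the equator of the unit sphere S² of ℝ³. Then g*(μ_{M,p}) = √(p² + 4(1−p)²/(M² sin²(π/M))) if M is even, and g*(μ_{M,p}) = √(p² + (1−p)²/(M² sin²(π/(2M)))) if M is odd. -/

import Mathlib

open MeasureTheory Real
open scoped ENNReal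

noncomputable section

abbrev E3 := EuclideanSpace ℝ (Fin 3)

/-- The unit sphere S² in ℝ³. -/
def unitSphere : Set E3 := Metric.sphere (0 : E3) 1

/-- `g C μ` is the supremum over unit vectors `v` of `∫ √(C² + (1−C²)⟨r,v⟩²) dμ(r)`. -/
def g (C : ℝ) (μ : Measure E3) : ℝ :=
  ⨆ v : unitSphere, ∫ r, Real.sqrt (C ^ 2 + (1 - C ^ 2) * (inner ℝ r (v : E3) : ℝ) ^ 2) ∂μ


/-- `gstar μ` is the supremum over unit vectors `v` of `∫ |⟨r,v⟩| dμ(r)`. -/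
def gstar (μ : Measure E3) : ℝ :=
  ⨆ v : unitSphere, ∫ r, |(inner ℝ r (v : E3) : ℝ)| ∂μ


/-- The point `(cos φ, sin φ, 0)` on the equator of the unit sphere. -/
def eqPt (φ : ℝ) : E3 := (WithLp.equiv 2 (Fin 3 → ℝ)).symm ![Real.cos φ, Real.sin φ, 0]

/-- The uniform probability measure on the equator: the pushforward of the normalized
Lebesgue measure on `[0, 2π)` under `φ ↦ (cos φ, sin φ, 0)`. -/
def equatorUniform : Measure E3 :=
  Measure.map eqPt ((ENNReal.ofReal (2 * π))⁻¹ • volume.restrict (Set.Ico 0 (2 * π)))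

/-- The north pole `e₃ = (0,0,1)`. -/
def northPole : E3 := EuclideanSpace.single (2 : Fin 3) (1 : ℝ)

/-!
In cylindrical coordinates `(ρ, ψ, z)`, a unit vector has `ρ² + z² = 1` and its integral
against `μ_{M,p}` is `p|z| + ((1-p)/M) |ρ| Σⱼ |cos(2πj/M - ψ)|`. As `|cos|` has period `π`,
the `M` polygon directions reduce modulo `π` to `n` equally spaced directions in a half turn,
counted twice if `M = 2n` and once if `M = n` is odd. On a period of length `π/n` exactly one
of these `n` cosines is nonnegative, and the sum of the others telescopes, so that
`Σₖ |cos(θ + kπ/n)| = sin(θ + π/2n) / sin(π/2n) ≤ 1 / sin(π/2n)`, with equality at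
`θ = π/2 - π/2n`.
What remains is maximizing `p|z| + c|ρ|` on the unit circle, which by Cauchy–Schwarz gives
`√(p² + c²)`.
-/

open Finset
open scoped RealInnerProductSpace

def halfTurnAbsCosSum (n : ℕ) (θ : ℝ) : ℝ := ∑ k ∈ range n, |cos (θ + k * (π / n))|

lemma two_mul_sin_mul_sum_range_cos (θ a : ℝ) (n : ℕ) :
    2 * sin a * ∑ k ∈ range n, cos (θ + k * (2 * a)) = sin (θ + (2 * n - 1) * a) - sin (θ - a) := by
  induction n with
  | zero => simp [sub_eq_add_neg]
  | succ n ih =>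
    rw [sum_range_succ, mul_add, ih,
      show θ + (2 * ((n + 1 : ℕ) : ℝ) - 1) * a = θ + n * (2 * a) + a by push_cast; ring,
      show θ + (2 * (n : ℝ) - 1) * a = θ + n * (2 * a) - a by ring, sin_add, sin_sub]
    ring

lemma halfTurnAbsCosSum_eq_of_mem_Icc {n : ℕ} (hn : 0 < n) {θ : ℝ}
    (hθ : θ ∈ Set.Icc (π / 2 - π / n) (π / 2)) :
    halfTurnAbsCosSum n θ = sin (θ + π / (2 * n)) / sin (π / (2 * n)) := by
  set a := π / (2 * n)
  have hn' : (0 : ℝ) < n := by exact_mod_cast hn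
  have h2na : 2 * n * a = π := by simp only [a]; field_simp
  have ha : 0 < a := by positivity
  have hsa : 0 < sin a :=
    sin_pos_of_pos_of_lt_pi ha (by nlinarith [pi_pos, (by exact_mod_cast hn : (1 : ℝ) ≤ n)])
  rw [halfTurnAbsCosSum]
  rw [show π / n = 2 * a by rw [← h2na]; field_simp] at hθ ⊢
  obtain ⟨m, rfl⟩ : ∃ m, n = m + 1 := ⟨n - 1, by omega⟩
  push_cast at h2na
  have hcos_first : 0 ≤ cos θ := cos_nonneg_of_mem_Icc ⟨by nlinarith [hθ.1], hθ.2⟩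
  have hcos_rest : ∀ k ∈ range m, cos (θ + (k + 1 : ℕ) * (2 * a)) ≤ 0 := by
    intro k hk
    have hk : ((k + 1 : ℕ) : ℝ) ≤ m := by exact_mod_cast mem_range.mp hk
    have hk1 : (1 : ℝ) ≤ (k + 1 : ℕ) := by exact_mod_cast Nat.le_add_left 1 k
    apply cos_nonpos_of_pi_div_two_le_of_le <;> nlinarith [hθ.1, hθ.2]
  have hsum := two_mul_sin_mul_sum_range_cos θ a (m + 1)
  rw [show θ + (2 * ((m + 1 : ℕ) : ℝ) - 1) * a = θ - a + π by push_cast; linarith, sin_add_pi,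
    sum_range_succ'] at hsum
  rw [sum_range_succ', sum_congr rfl fun k hk => abs_of_nonpos (hcos_rest k hk),
    Nat.cast_zero, zero_mul, add_zero, abs_of_nonneg hcos_first, eq_div_iff hsa.ne', sin_add]
  simp only [Nat.cast_zero, zero_mul, add_zero, sum_neg_distrib] at hsum ⊢
  rw [sin_sub] at hsum
  linear_combination -hsum / 2

lemma halfTurnAbsCosSum_periodic {n : ℕ} (hn : 0 < n) :
    Function.Periodic (halfTurnAbsCosSum n) (π / n) := by
  intro θ
  set f : ℕ → ℝ := fun k => |cos (θ + k * (π / n))|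
  have hlast : f n = f 0 := by
    simp only [f, Nat.cast_zero, zero_mul, add_zero]
    rw [mul_div_cancel₀ _ (by positivity), cos_add_pi, abs_neg]
  have hshift : ∀ k : ℕ, |cos (θ + π / n + k * (π / n))| = f (k + 1) := by
    intro k; simp only [f]; push_cast; ring_nf
  rw [halfTurnAbsCosSum, halfTurnAbsCosSum, sum_congr rfl fun k _ => hshift k]
  linarith [sum_range_succ' f n, sum_range_succ f n]

lemma isGreatest_range_halfTurnAbsCosSum {n : ℕ} (hn : 0 < n) :
    IsGreatest (Set.range (halfTurnAbsCosSum n)) (1 / sin (π / (2 * n))) := by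
  have hn' : (1 : ℝ) ≤ n := by exact_mod_cast hn
  have hT : 0 < π / n := by positivity
  have hsa : 0 < sin (π / (2 * n)) :=
    sin_pos_of_pos_of_lt_pi (by positivity) (by
      rw [div_lt_iff₀ (by positivity)]; nlinarith [pi_pos])
  have hhalf : π / (2 * n) = π / n / 2 := by ring
  refine ⟨⟨π / 2 - π / (2 * n), ?_⟩, ?_⟩
  · rw [halfTurnAbsCosSum_eq_of_mem_Icc hn ⟨by linarith, by linarith⟩, sub_add_cancel,
      sin_pi_div_two]
  · rintro _ ⟨θ, rfl⟩
    obtain ⟨h1, h2⟩ := toIcoMod_mem_Ico hT (π / 2 - π / n) θ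
    rw [← (halfTurnAbsCosSum_periodic hn).sub_zsmul_eq (toIcoDiv hT (π / 2 - π / n) θ),
      self_sub_toIcoDiv_zsmul, halfTurnAbsCosSum_eq_of_mem_Icc hn ⟨h1, by linarith⟩]
    exact div_le_div_of_nonneg_right (sin_le_one _) hsa.le

def polygonAbsCosSum (M : ℕ) (θ : ℝ) : ℝ := ∑ j ∈ range M, |cos (θ + 2 * π * j / M)|

lemma polygonAbsCosSum_two_mul {n : ℕ} (hn : 0 < n) (θ : ℝ) :
    polygonAbsCosSum (2 * n) θ = 2 * halfTurnAbsCosSum n θ := by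
  rw [polygonAbsCosSum, two_mul n, sum_range_add, two_mul (halfTurnAbsCosSum n θ),
    halfTurnAbsCosSum]
  congr 1
  · exact sum_congr rfl fun k _ => by push_cast; ring_nf
  · refine sum_congr rfl fun k _ => ?_
    rw [show θ + 2 * π * ((n + k : ℕ) : ℝ) / ((n + n : ℕ) : ℝ) = θ + k * (π / n) + π by
      push_cast; field_simp; ring, cos_add_pi, abs_neg]

lemma mul_mod_mul_mod_eq_self {M u w a : ℕ} (h : u * w ≡ 1 [MOD M]) (ha : a < M) :
    w * (u * a % M) % M = a :=
  calc w * (u * a % M) % M = (u * w) * a % M := by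
        rw [Nat.mul_mod, Nat.mod_mod, ← Nat.mul_mod]; ring_nf
    _ = a := by rw [Nat.mul_mod, h, ← Nat.mul_mod, one_mul, Nat.mod_eq_of_lt ha]

-- multiplication by 2 permutes the residues modulo an odd `M`, and `|cos|` has period `π`
lemma polygonAbsCosSum_of_odd {M : ℕ} (hM : Odd M) (θ : ℝ) :
    polygonAbsCosSum M θ = halfTurnAbsCosSum M θ := by
  have hM0 : 0 < M := hM.pos
  have hinv : 2 * ((M + 1) / 2) ≡ 1 [MOD M] := by
    rw [Nat.two_mul_div_two_of_even hM.add_one]; exact Nat.add_mod_left M 1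
  refine sum_nbij' (fun j => 2 * j % M) (fun k => (M + 1) / 2 * k % M)
    (fun j _ => mem_range.2 (Nat.mod_lt _ hM0)) (fun k _ => mem_range.2 (Nat.mod_lt _ hM0))
    (fun j hj => mul_mod_mul_mod_eq_self hinv (mem_range.1 hj))
    (fun k hk => mul_mod_mul_mod_eq_self ((Nat.mul_comm _ _).symm ▸ hinv) (mem_range.1 hk))
    fun j _ => ?_
  have hdiv : ((2 * j : ℕ) : ℝ) = M * (2 * j / M : ℕ) + (2 * j % M : ℕ) := by
    exact_mod_cast (Nat.div_add_mod (2 * j) M).symm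
  rw [show θ + 2 * π * j / M = θ + (2 * j % M : ℕ) * (π / M) + (2 * j / M : ℕ) * π by
    push_cast at hdiv; field_simp; linear_combination π * hdiv, cos_add_nat_mul_pi, abs_mul,
    abs_pow, abs_neg, abs_one, one_pow, one_mul]

def polygonAbsCosMax (M : ℕ) : ℝ := if Even M then 2 / sin (π / M) else 1 / sin (π / (2 * M))

lemma isGreatest_range_polygonAbsCosSum {M : ℕ} (hM : 0 < M) :
    IsGreatest (Set.range (polygonAbsCosSum M)) (polygonAbsCosMax M) := by
  rcases Nat.even_or_odd' M with ⟨n, rfl | rfl⟩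
  · have hn : 0 < n := by omega
    obtain ⟨⟨θ, hθ⟩, hle⟩ := isGreatest_range_halfTurnAbsCosSum hn
    have hval : 2 / sin (π / (2 * n : ℕ)) = 2 * (1 / sin (π / (2 * n))) := by push_cast; ring
    rw [polygonAbsCosMax, if_pos (even_two_mul n), hval]
    refine ⟨⟨θ, by rw [polygonAbsCosSum_two_mul hn, hθ]⟩, ?_⟩
    rintro _ ⟨ψ, rfl⟩
    rw [polygonAbsCosSum_two_mul hn]
    linarith [hle ⟨ψ, rfl⟩]
  · have hodd : Odd (2 * n + 1) := odd_two_mul_add_one n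
    rw [polygonAbsCosMax, if_neg (Nat.not_even_iff_odd.2 hodd),
      funext (polygonAbsCosSum_of_odd hodd)]
    exact isGreatest_range_halfTurnAbsCosSum hM

lemma mul_add_mul_le_sqrt {a b x y : ℝ} (h : x ^ 2 + y ^ 2 = 1) :
    a * x + b * y ≤ √(a ^ 2 + b ^ 2) :=
  le_sqrt_of_sq_le (by nlinarith [sq_nonneg (a * y - b * x)])

lemma exists_mul_add_mul_eq_sqrt {a b : ℝ} (ha : 0 ≤ a) (hb : 0 ≤ b) :
    ∃ x y : ℝ, 0 ≤ x ∧ 0 ≤ y ∧ x ^ 2 + y ^ 2 = 1 ∧ a * x + b * y = √(a ^ 2 + b ^ 2) := by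
  rcases (add_nonneg (sq_nonneg a) (sq_nonneg b)).eq_or_lt with h | h
  · refine ⟨1, 0, zero_le_one, le_rfl, by norm_num, ?_⟩
    rw [← h, sqrt_zero]; nlinarith
  · have hs := sq_sqrt h.le
    refine ⟨a / √(a ^ 2 + b ^ 2), b / √(a ^ 2 + b ^ 2), by positivity, by positivity, ?_, ?_⟩
    · field_simp; linarith
    · field_simp; linarith

def cylPt (ρ ψ z : ℝ) : E3 := !₂[ρ * cos ψ, ρ * sin ψ, z]

lemma exists_eq_cylPt (v : E3) : ∃ ρ ψ z, v = cylPt ρ ψ z := by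
  set w : ℂ := ⟨v 0, v 1⟩
  refine ⟨‖w‖, Complex.arg w, v 2, ?_⟩
  ext i
  fin_cases i <;> simp [cylPt, Complex.norm_mul_cos_arg, Complex.norm_mul_sin_arg, w]

lemma cylPt_mem_unitSphere_iff {ρ ψ z : ℝ} : cylPt ρ ψ z ∈ unitSphere ↔ ρ ^ 2 + z ^ 2 = 1 := by
  rw [unitSphere, mem_sphere_zero_iff_norm, EuclideanSpace.norm_eq, sqrt_eq_one,
    Fin.sum_univ_three]
  simp only [cylPt, Real.norm_eq_abs, sq_abs, Matrix.cons_val_zero, Matrix.cons_val_one,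
    Matrix.cons_val]
  constructor <;> intro h <;> nlinarith [sin_sq_add_cos_sq ψ]

lemma inner_eqPt_cylPt (φ ρ ψ z : ℝ) : ⟪eqPt φ, cylPt ρ ψ z⟫ = ρ * cos (φ - ψ) := by
  simp [eqPt, cylPt, PiLp.inner_apply, Fin.sum_univ_three, cos_sub]
  ring

lemma inner_northPole_cylPt (ρ ψ z : ℝ) : ⟪northPole, cylPt ρ ψ z⟫ = z := by
  simp [northPole, cylPt, EuclideanSpace.inner_single_left]

def polygonZMeasure (M : ℕ) (p : ℝ) : Measure E3 :=
  ENNReal.ofReal (p / 2) • (Measure.dirac northPole + Measure.dirac (-northPole))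
    + ENNReal.ofReal ((1 - p) / M) • ∑ j : Fin M, Measure.dirac (eqPt (2 * π * (j : ℕ) / M))

lemma integral_polygonZMeasure {M : ℕ} {p : ℝ} (hp0 : 0 ≤ p) (hp1 : p ≤ 1) (f : E3 → ℝ) :
    ∫ r, f r ∂polygonZMeasure M p = p / 2 * (f northPole + f (-northPole))
      + (1 - p) / M * ∑ j : Fin M, f (eqPt (2 * π * (j : ℕ) / M)) := by
  have hf : ∀ a, Integrable f (Measure.dirac a) := fun a => integrable_dirac enorm_lt_top
  rw [polygonZMeasure, integral_add_measure, integral_smul_measure, integral_smul_measure,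
    integral_add_measure (hf _) (hf _), integral_finsetSum_measure fun j _ => hf _,
    ENNReal.toReal_ofReal (by linarith),
    ENNReal.toReal_ofReal (div_nonneg (by linarith) (by positivity))]
  · simp only [integral_dirac, smul_eq_mul]
  · exact ((hf _).add_measure (hf _)).smul_measure ENNReal.ofReal_ne_top
  · exact (integrable_finsetSum_measure.2 fun j _ => hf _).smul_measure ENNReal.ofReal_ne_top

lemma integral_abs_inner_cylPt {M : ℕ} {p : ℝ} (hp0 : 0 ≤ p) (hp1 : p ≤ 1) (ρ ψ z : ℝ) :
    ∫ r, |⟪r, cylPt ρ ψ z⟫| ∂polygonZMeasure M p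
      = p * |z| + (1 - p) / M * |ρ| * polygonAbsCosSum M (-ψ) := by
  rw [integral_polygonZMeasure hp0 hp1, inner_neg_left, abs_neg, inner_northPole_cylPt,
    polygonAbsCosSum, Fin.sum_univ_eq_sum_range (fun j => |⟪eqPt (2 * π * j / M), cylPt ρ ψ z⟫|)]
  simp only [inner_eqPt_cylPt, abs_mul, sub_eq_neg_add, ← mul_sum]
  ring

lemma gstar_eq_of_isGreatest {μ : Measure E3} {T : ℝ}
    (h : IsGreatest ((fun v => ∫ r, |⟪r, v⟫| ∂μ) '' unitSphere) T) : gstar μ = T := by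
  obtain ⟨v, hv, -⟩ := h.1
  have : Nonempty unitSphere := ⟨⟨v, hv⟩⟩
  rw [Set.image_eq_range] at h
  exact h.isLUB.ciSup_eq

lemma gstar_polygonZMeasure {M : ℕ} (hM : 0 < M) {p : ℝ} (hp0 : 0 ≤ p) (hp1 : p ≤ 1) :
    gstar (polygonZMeasure M p) = √(p ^ 2 + ((1 - p) / M * polygonAbsCosMax M) ^ 2) := by
  obtain ⟨⟨θ, hθ⟩, hle⟩ := isGreatest_range_polygonAbsCosSum hM
  have hw : 0 ≤ (1 - p) / M := div_nonneg (by linarith) (by positivity)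
  have hQ : 0 ≤ polygonAbsCosMax M := hθ ▸ sum_nonneg fun _ _ => abs_nonneg _
  apply gstar_eq_of_isGreatest
  constructor
  · obtain ⟨z, ρ, hz, hρ, hunit, hmax⟩ := exists_mul_add_mul_eq_sqrt hp0 (mul_nonneg hw hQ)
    refine ⟨cylPt ρ (-θ) z, cylPt_mem_unitSphere_iff.2 (by linarith), ?_⟩
    dsimp only
    rw [integral_abs_inner_cylPt hp0 hp1, neg_neg, hθ, abs_of_nonneg hz, abs_of_nonneg hρ,
      ← hmax]
    ring
  · rintro _ ⟨v, hv, rfl⟩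
    obtain ⟨ρ, ψ, z, rfl⟩ := exists_eq_cylPt v
    dsimp only
    rw [integral_abs_inner_cylPt hp0 hp1]
    calc p * |z| + (1 - p) / M * |ρ| * polygonAbsCosSum M (-ψ)
        ≤ p * |z| + (1 - p) / M * polygonAbsCosMax M * |ρ| := by
          rw [mul_right_comm]; gcongr; exact hle ⟨_, rfl⟩
      _ ≤ _ := mul_add_mul_le_sqrt <| by
          rw [sq_abs, sq_abs]; linarith [cylPt_mem_unitSphere_iff.1 hv]

/-- For an integer `M ≥ 3` and `p ∈ [0,1]`, consider the polygon+Z measure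
`μ_{M,p} = (p/2)(δ_{e₃} + δ_{−e₃}) + ((1−p)/M)·Σ_{j=1}^M δ_{r_j}`, where the `r_j` are the
vertices of a regular `M`-gon inscribed in the equator of the unit sphere S² of ℝ³.  Then
`g*(μ_{M,p}) = √(p² + 4(1−p)²/(M²sin²(π/M)))` when `M` is even, and
`g*(μ_{M,p}) = √(p² + (1−p)²/(M²sin²(π/(2M))))` when `M` is odd. -/
theorem gstar_polygonZ (M : ℕ) (hM : 3 ≤ M) (p : ℝ) (hp : p ∈ Set.Icc (0 : ℝ) 1) :
    gstar (ENNReal.ofReal (p / 2) • (Measure.dirac northPole + Measure.dirac (-northPole))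
        + ENNReal.ofReal ((1 - p) / M) • ∑ j : Fin M, Measure.dirac (eqPt (2 * π * (j : ℕ) / M)))
      = if Even M then Real.sqrt (p ^ 2 + 4 * (1 - p) ^ 2 / ((M : ℝ) ^ 2 * Real.sin (π / M) ^ 2))
        else Real.sqrt (p ^ 2 + (1 - p) ^ 2 / ((M : ℝ) ^ 2 * Real.sin (π / (2 * M)) ^ 2)) := by
  change gstar (polygonZMeasure M p) = _
  rw [gstar_polygonZMeasure (by omega) hp.1 hp.2, polygonAbsCosMax]
  split_ifs <;> congr 1 <;> ring
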